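/- For every integer n ≥ 0, every real c ≥ 0 and every real t > 0, one has φ_n(t;c) ≤ t^{n/2}/Γ(1 + n/2), with equality when c = 0, i.e. φ_n(t;0) = t^{n/2}/Γ(1 + n/2). Consequently, for every integer n ≥ 1 and every c ≥ 0, lim_{t→0+} φ_n(t;c) = 0. -/

import Mathlib

/-- `φ_n(t;c) = t^{-3/2}/(2√π (n+1)!) ∫_c^∞ e^{-τ²/(4t)} τ (τ-c)^{n+1} dτ`. -/
noncomputable def phi (n : ℕ) (c t : ℝ) : ℝ :=
  t ^ (-(3 : ℝ) / 2) / (2 * Real.sqrt Real.pi * (Nat.factorial (n + 1) : ℝ)) *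
    ∫ τ in Set.Ioi c, Real.exp (-τ ^ 2 / (4 * t)) * τ * (τ - c) ^ (n + 1)

/-!
For `τ > c ≥ 0` the integrand lies between `0` and `τ ^ (n + 2) * e^{-τ²/(4t)}`, the integrand
at `c = 0`, so `φ_n(t;c) ≤ φ_n(t;0)`. The latter is a Gaussian moment,
`∫₀^∞ τ^k e^{-τ²/(4t)} dτ = 2^k t^{(k+1)/2} Γ((k+1)/2)`, and Legendre's duplication formula
`Γ(1 + n/2) Γ((n+3)/2) = (n+1)! √π / 2^{n+1}` turns it into `t^{n/2} / Γ(1 + n/2)`, which tends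
to `0` as `t → 0+` once `n ≥ 1`.
-/

open Real MeasureTheory Set Filter Topology
open scoped Nat

lemma Gamma_add_one_div_two_mul_Gamma_add_two_div_two (m : ℕ) :
    Gamma ((m + 1) / 2) * Gamma ((m + 2) / 2) = m ! * √π / 2 ^ m := by
  have h := Gamma_mul_Gamma_add_half ((m + 1) / 2)
  rw [show (m + 1 : ℝ) / 2 + 1 / 2 = (m + 2) / 2 by ring,
    show 2 * ((m + 1 : ℝ) / 2) = m + 1 by ring, Gamma_nat_eq_factorial,
    show 1 - ((m : ℝ) + 1) = -(m : ℕ) by ring, rpow_neg zero_le_two, rpow_natCast] at h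
  rw [h, div_eq_mul_inv]
  ring

lemma exp_neg_sq_div_eq (t τ : ℝ) : exp (-τ ^ 2 / (4 * t)) = exp (-(4 * t)⁻¹ * τ ^ 2) := by
  ring_nf

section GaussianMoments

variable {t : ℝ}

lemma integrableOn_pow_mul_exp_neg_sq_div (k : ℕ) (ht : 0 < t) :
    IntegrableOn (fun τ : ℝ ↦ τ ^ k * exp (-τ ^ 2 / (4 * t))) (Ioi 0) := by
  have h := integrableOn_rpow_mul_exp_neg_mul_sq (b := (4 * t)⁻¹) (by positivity)
    (by linarith [(k.cast_nonneg : (0 : ℝ) ≤ k)] : (-1 : ℝ) < k)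
  simp only [rpow_natCast, ← exp_neg_sq_div_eq t] at h
  exact h

lemma integral_pow_mul_exp_neg_sq_div (k : ℕ) (ht : 0 < t) :
    ∫ τ in Ioi 0, τ ^ k * exp (-τ ^ 2 / (4 * t)) =
      2 ^ k * t ^ ((k + 1 : ℝ) / 2) * Gamma ((k + 1) / 2) := by
  have h := integral_rpow_mul_exp_neg_mul_rpow two_pos
    (by linarith [(k.cast_nonneg : (0 : ℝ) ≤ k)] : (-1 : ℝ) < k)
    (by positivity : 0 < (4 * t)⁻¹)
  simp only [rpow_natCast, rpow_two, ← exp_neg_sq_div_eq t] at h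
  rw [h, inv_rpow (by positivity), ← rpow_neg (by positivity), neg_div, neg_neg,
    mul_rpow zero_le_four ht.le, show (4 : ℝ) = 2 ^ (2 : ℝ) by norm_num, ← rpow_mul zero_le_two,
    show 2 * (((k : ℝ) + 1) / 2) = (k + 1 : ℕ) by push_cast; ring, rpow_natCast]
  ring

end GaussianMoments

section Phi

variable {n : ℕ} {c t : ℝ}

lemma exp_mul_self_mul_sub_pow_nonneg (hc : 0 ≤ c) {τ : ℝ} (hτ : c ≤ τ) :
    0 ≤ exp (-τ ^ 2 / (4 * t)) * τ * (τ - c) ^ (n + 1) := by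
  have := hc.trans hτ
  have := sub_nonneg.2 hτ
  positivity

lemma setIntegral_exp_mul_self_mul_sub_pow_le (hc : 0 ≤ c) (ht : 0 < t) :
    ∫ τ in Ioi c, exp (-τ ^ 2 / (4 * t)) * τ * (τ - c) ^ (n + 1) ≤
      ∫ τ in Ioi 0, τ ^ (n + 2) * exp (-τ ^ 2 / (4 * t)) := by
  have hg := integrableOn_pow_mul_exp_neg_sq_div (n + 2) ht
  calc _ ≤ ∫ τ in Ioi c, τ ^ (n + 2) * exp (-τ ^ 2 / (4 * t)) := by
        refine integral_mono_of_nonneg ?_ (hg.mono_set (Ioi_subset_Ioi hc)) ?_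
        · filter_upwards [ae_restrict_mem measurableSet_Ioi] with τ (hτ : c < τ)
          exact exp_mul_self_mul_sub_pow_nonneg hc hτ.le
        · filter_upwards [ae_restrict_mem measurableSet_Ioi] with τ (hτ : c < τ)
          calc _ ≤ exp (-τ ^ 2 / (4 * t)) * τ * τ ^ (n + 1) := by
                have := hc.trans hτ.le
                gcongr
                linarith
            _ = _ := by ring
    _ ≤ _ := by
        refine setIntegral_mono_set hg ?_ (Ioi_subset_Ioi hc).eventuallyLE
        filter_upwards [ae_restrict_mem measurableSet_Ioi] with τ (hτ : 0 < τ)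
        positivity

lemma phi_prefactor_nonneg (ht : 0 < t) :
    0 ≤ t ^ (-(3 : ℝ) / 2) / (2 * √π * (n + 1)! : ℝ) := by
  have := rpow_nonneg ht.le (-(3 : ℝ) / 2)
  positivity

lemma phi_zero_eq_mul_integral :
    phi n 0 t = t ^ (-(3 : ℝ) / 2) / (2 * √π * (n + 1)! : ℝ) *
      ∫ τ in Ioi 0, τ ^ (n + 2) * exp (-τ ^ 2 / (4 * t)) := by
  simp_rw [phi, sub_zero]
  congr 2 with τ
  ring

lemma phi_zero_eq (ht : 0 < t) :
    phi n 0 t = t ^ ((n : ℝ) / 2) / Gamma (1 + (n : ℝ) / 2) := by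
  have hΓpos : 0 < Gamma (1 + (n : ℝ) / 2) := Gamma_pos_of_pos (by positivity)
  have hΓ : Gamma ((((n + 2 : ℕ) : ℝ) + 1) / 2) =
      (n + 1)! * √π / 2 ^ (n + 1) / Gamma (1 + n / 2) := by
    rw [eq_div_iff hΓpos.ne', mul_comm, ← Gamma_add_one_div_two_mul_Gamma_add_two_div_two]
    congr 2 <;> push_cast <;> ring
  have htpow : t ^ (-(3 : ℝ) / 2) * t ^ ((((n + 2 : ℕ) : ℝ) + 1) / 2) = t ^ ((n : ℝ) / 2) := by
    rw [← rpow_add ht]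
    congr 1
    push_cast
    ring
  rw [phi_zero_eq_mul_integral, integral_pow_mul_exp_neg_sq_div _ ht, hΓ, ← htpow]
  field_simp
  ring

lemma phi_nonneg (hc : 0 ≤ c) (ht : 0 < t) : 0 ≤ phi n c t :=
  mul_nonneg (phi_prefactor_nonneg ht) <| setIntegral_nonneg measurableSet_Ioi
    fun _ hτ ↦ exp_mul_self_mul_sub_pow_nonneg hc (le_of_lt hτ)

lemma phi_le_phi_zero (hc : 0 ≤ c) (ht : 0 < t) : phi n c t ≤ phi n 0 t := by
  rw [phi_zero_eq_mul_integral]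
  exact mul_le_mul_of_nonneg_left (setIntegral_exp_mul_self_mul_sub_pow_le hc ht)
    (phi_prefactor_nonneg ht)

lemma tendsto_phi_nhdsGT_zero (hn : 1 ≤ n) (hc : 0 ≤ c) :
    Tendsto (fun t ↦ phi n c t) (𝓝[>] 0) (𝓝 0) := by
  have hn2 : 0 < (n : ℝ) / 2 := by positivity
  have hpow : Tendsto (fun t : ℝ ↦ t ^ ((n : ℝ) / 2)) (𝓝 0) (𝓝 0) := by
    simpa [zero_rpow hn2.ne'] using (continuousAt_rpow_const 0 _ (.inr hn2.le)).tendsto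
  have hbound : Tendsto (fun t : ℝ ↦ t ^ ((n : ℝ) / 2) / Gamma (1 + (n : ℝ) / 2))
      (𝓝[>] 0) (𝓝 0) := by
    simpa using (hpow.mono_left nhdsWithin_le_nhds).div_const (Gamma (1 + (n : ℝ) / 2))
  refine squeeze_zero' ?_ ?_ hbound <;> filter_upwards [self_mem_nhdsWithin] with t ht
  · exact phi_nonneg hc ht
  · exact (phi_le_phi_zero hc ht).trans_eq (phi_zero_eq ht)

end Phi

/-- `φ_n(t;c) ≤ t^{n/2}/Γ(1 + n/2)` for `c ≥ 0`, `t > 0`, with equality when `c = 0`;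
consequently `φ_n(t;c) → 0` as `t → 0+` for `n ≥ 1`. -/
theorem phi_bound_and_limit :
    (∀ (n : ℕ) (c t : ℝ), 0 ≤ c → 0 < t →
      phi n c t ≤ t ^ ((n : ℝ) / 2) / Real.Gamma (1 + (n : ℝ) / 2)) ∧
    (∀ (n : ℕ) (t : ℝ), 0 < t →
      phi n 0 t = t ^ ((n : ℝ) / 2) / Real.Gamma (1 + (n : ℝ) / 2)) ∧
    (∀ (n : ℕ), 1 ≤ n → ∀ c : ℝ, 0 ≤ c →
      Filter.Tendsto (fun t => phi n c t) (nhdsWithin 0 (Set.Ioi 0)) (nhds 0)) :=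
  ⟨fun _ _ _ hc ht ↦ (phi_le_phi_zero hc ht).trans_eq (phi_zero_eq ht),
    fun _ _ ht ↦ phi_zero_eq ht,
    fun _ hn _ hc ↦ tendsto_phi_nhdsGT_zero hn hc⟩
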